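/- If Ω ⊆ K Π K is a Farber subcomplex and v₀ is a vertex of K, then the subcomplex Σ = i₀⁻¹(Ω) ⊆ K, where i₀ : K → K Π K is the simplicial map i₀(w) = (v₀, w), is a categorical subcomplex of K, i.e., the inclusion Σ ⊆ K is in the contiguity class of the constant map at v₀. -/

import Mathlib

attribute [local instance] Classical.decEq

/-- An abstract simplicial complex on vertex set `V`. -/
structure SC (V : Type) where
  faces : Set (Finset V)
  down_closed : ∀ {σ τ : Finset V}, σ ∈ faces → τ ⊆ σ → τ.Nonempty → τ ∈ faces

/-- A vertex map inducing a simplicial map `K → L`. -/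
def IsSimplicialMap {V W : Type} (K : SC V) (L : SC W) (f : V → W) : Prop :=
  ∀ σ ∈ K.faces, σ.image f ∈ L.faces

/-- Two maps are contiguous: for each simplex, the union of images is a simplex. -/
def Contiguous {V W : Type} (K : SC V) (L : SC W) (f g : V → W) : Prop :=
  ∀ σ ∈ K.faces, σ.image f ∪ σ.image g ∈ L.faces

/-- Being in the same contiguity class: connected by a finite chain of contiguous maps. -/
def ContigClass {V W : Type} (K : SC V) (L : SC W) : (V → W) → (V → W) → Prop :=
  Relation.ReflTransGen (Contiguous K L)

/-- The categorical product of two simplicial complexes. -/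
def prodSC {V W : Type} (K : SC V) (L : SC W) : SC (V × W) where
  faces := {σ | σ.image Prod.fst ∈ K.faces ∧ σ.image Prod.snd ∈ L.faces}
  down_closed := fun hσ hτσ hne =>
    ⟨K.down_closed hσ.1 (Finset.image_subset_image hτσ) (hne.image _),
     L.down_closed hσ.2 (Finset.image_subset_image hτσ) (hne.image _)⟩

/-- `Ω` is a Farber subcomplex of `K Π K`: a subcomplex admitting a simplicial map
`s : Ω → K` with `Δ ∘ s` in the contiguity class of the inclusion. -/
def IsFarber {V : Type} (K : SC V) (Ω : SC (V × V)) : Prop :=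
  Ω.faces ⊆ (prodSC K K).faces ∧
  ∃ s : V × V → V, IsSimplicialMap Ω K s ∧
    ContigClass Ω (prodSC K K) (fun p => (s p, s p)) id

/-- `K Π K` is covered by `n + 1` Farber subcomplexes. -/
def TCle {V : Type} (K : SC V) (n : ℕ) : Prop :=
  ∃ Ω : Fin (n + 1) → SC (V × V), (∀ i, IsFarber K (Ω i)) ∧
    ∀ σ ∈ (prodSC K K).faces, ∃ i, σ ∈ (Ω i).faces

/-- Discrete topological complexity. -/
noncomputable def TCdisc {V : Type} (K : SC V) : ℕ∞ :=
  sInf {n : ℕ∞ | ∃ m : ℕ, n = (m : ℕ∞) ∧ TCle K m}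

/-- A categorical subcomplex: the inclusion is in the contiguity class of a constant map
at a vertex of `K`. -/
def IsCategorical {V : Type} (K : SC V) (L : SC V) : Prop :=
  L.faces ⊆ K.faces ∧ ∃ v : V, {v} ∈ K.faces ∧ ContigClass L K id (fun _ => v)

/-- `K` is covered by `n + 1` categorical subcomplexes. -/
def scatLe {V : Type} (K : SC V) (n : ℕ) : Prop :=
  ∃ L : Fin (n + 1) → SC V, (∀ i, IsCategorical K (L i)) ∧
    ∀ σ ∈ K.faces, ∃ i, σ ∈ (L i).faces

/-- Normalized simplicial LS-category. -/
noncomputable def scat {V : Type} (K : SC V) : ℕ∞ :=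
  sInf {n : ℕ∞ | ∃ m : ℕ, n = (m : ℕ∞) ∧ scatLe K m}

/-- The preimage subcomplex of a subcomplex `Ω` under a vertex map `f`,
inside an ambient complex `M`. -/
def preimSC {V W : Type} (M : SC W) (Ω : SC V) (f : W → V) : SC W where
  faces := {τ | τ ∈ M.faces ∧ τ.image f ∈ Ω.faces}
  down_closed := fun hσ hτσ hne =>
    ⟨M.down_closed hσ.1 hτσ hne,
     Ω.down_closed hσ.2 (Finset.image_subset_image hτσ) (hne.image _)⟩

/-- `K` and `L` have the same strong homotopy type. -/
def StrongEquiv {V W : Type} (K : SC V) (L : SC W) : Prop :=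
  ∃ (φ : V → W) (ψ : W → V), IsSimplicialMap K L φ ∧ IsSimplicialMap L K ψ ∧
    ContigClass L L (φ ∘ ψ) id ∧ ContigClass K K (ψ ∘ φ) id

/-- `K` is edge-path connected. -/
def EdgeConn {V : Type} (K : SC V) : Prop :=
  ∀ v w : V, {v} ∈ K.faces → {w} ∈ K.faces →
    Relation.ReflTransGen (fun a b => ({a, b} : Finset V) ∈ K.faces) v w

/-- `K` is strongly collapsible: the identity is in the contiguity class of a constant map. -/
def StronglyCollapsible {V : Type} (K : SC V) : Prop :=
  ∃ v : V, {v} ∈ K.faces ∧ ContigClass K K id (fun _ => v)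

/-!
Let `s : Ω → K` be the Farber section, with `Δ ∘ s` joined to the inclusion `Ω ⊆ K Π K` by a
chain of contiguities. Restricting this chain along `i₀ : Σ → Ω` and projecting it to either
factor gives chains in `K`: the first projection joins `s ∘ i₀` to the constant map at `v₀`,
the second joins `s ∘ i₀` to the inclusion `Σ ⊆ K`.
-/

theorem Contiguous.symm {V W : Type} {K : SC V} {L : SC W} {f g : V → W}
    (h : Contiguous K L f g) : Contiguous K L g f := fun σ hσ => by
  rw [Finset.union_comm]
  exact h σ hσ

theorem ContigClass.symm {V W : Type} {K : SC V} {L : SC W} {f g : V → W}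
    (h : ContigClass K L f g) : ContigClass K L g f :=
  haveI : Std.Symm (Contiguous K L) := ⟨fun _ _ => Contiguous.symm⟩
  Std.Symm.symm (r := Relation.ReflTransGen (Contiguous K L)) _ _ h

theorem Contiguous.comp {U V W X : Type} {M : SC U} {K : SC V} {L : SC W} {N : SC X}
    {f g : V → W} {p : U → V} {q : W → X}
    (hp : IsSimplicialMap M K p) (hq : IsSimplicialMap L N q)
    (h : Contiguous K L f g) : Contiguous M N (q ∘ f ∘ p) (q ∘ g ∘ p) := fun σ hσ => by
  simpa only [Finset.image_union, Finset.image_image] using hq _ (h _ (hp σ hσ))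

theorem ContigClass.comp {U V W X : Type} {M : SC U} {K : SC V} {L : SC W} {N : SC X}
    {f g : V → W} {p : U → V} {q : W → X}
    (hp : IsSimplicialMap M K p) (hq : IsSimplicialMap L N q)
    (h : ContigClass K L f g) : ContigClass M N (q ∘ f ∘ p) (q ∘ g ∘ p) :=
  Relation.ReflTransGen.lift (fun m => q ∘ m ∘ p) (fun _ _ => Contiguous.comp hp hq) _ _ h

theorem isSimplicialMap_fst {V W : Type} (K : SC V) (L : SC W) :
    IsSimplicialMap (prodSC K L) K Prod.fst := fun _ hσ => hσ.1

theorem isSimplicialMap_snd {V W : Type} (K : SC V) (L : SC W) :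
    IsSimplicialMap (prodSC K L) L Prod.snd := fun _ hσ => hσ.2

theorem isSimplicialMap_preimSC {V W : Type} (M : SC W) (Ω : SC V) (f : W → V) :
    IsSimplicialMap (preimSC M Ω f) Ω f := fun _ hσ => hσ.2

theorem preimage_farber_categorical_general {V : Type} (K : SC V) (Ω : SC (V × V))
    (hΩ : IsFarber K Ω) (v₀ : V) :
    ContigClass (preimSC K Ω (fun w => (v₀, w))) K id (fun _ => v₀) := by
  obtain ⟨-, s, -, hchain⟩ := hΩ
  have hi₀ := isSimplicialMap_preimSC K Ω (fun w => (v₀, w))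
  have to_const : ContigClass (preimSC K Ω (fun w => (v₀, w))) K
      (fun w => s (v₀, w)) (fun _ => v₀) :=
    hchain.comp hi₀ (isSimplicialMap_fst K K)
  have to_id : ContigClass (preimSC K Ω (fun w => (v₀, w))) K (fun w => s (v₀, w)) id :=
    hchain.comp hi₀ (isSimplicialMap_snd K K)
  exact to_id.symm.trans to_const

/-- the preimage of a Farber subcomplex under `i₀(w) = (v₀, w)` is a
categorical subcomplex: its inclusion is in the contiguity class of the constant map
at `v₀`. -/
theorem preimage_farber_categorical {V : Type} (K : SC V) (Ω : SC (V × V))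
    (hΩ : IsFarber K Ω) (v₀ : V) (hv : {v₀} ∈ K.faces) :
    ContigClass (preimSC K Ω (fun w => (v₀, w))) K id (fun _ => v₀) :=
  preimage_farber_categorical_general K Ω hΩ v₀
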